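/- arXiv:1610.06765 — 4 statements merged into one kernel-verified Lean document; each statement's English description precedes it below -/
import Mathlib

section
/- For all real numbers t ≥ 0 and s ≥ e^{1/4}, one has s·t ≤ (e^{t²} − 1) + s·(log s)^{1/2}. -/
open Real

/-- For all real `t ≥ 0` and `s ≥ e^{1/4}`:
    `s·t ≤ (e^{t²} − 1) + s·(log s)^{1/2}`. -/
theorem stmt_0 (t s : ℝ) (ht : 0 ≤ t) (hs : Real.exp (1/4) ≤ s) :
    s * t ≤ (Real.exp (t ^ 2) - 1) + s * Real.sqrt (Real.log s) := by
  have hspos : 0 < s := lt_of_lt_of_le (Real.exp_pos _) hs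
  have hlog : (1:ℝ)/4 ≤ Real.log s := by
    have := Real.log_le_log (Real.exp_pos _) hs
    rwa [Real.log_exp] at this
  set a := Real.sqrt (Real.log s) with ha_def
  have ha2 : a ^ 2 = Real.log s := Real.sq_sqrt (by linarith)
  have ha : (1:ℝ)/2 ≤ a := by
    have h := Real.sqrt_le_sqrt hlog
    rwa [show (1:ℝ)/4 = (1/2:ℝ)^2 by norm_num, Real.sqrt_sq (by norm_num : (0:ℝ) ≤ 1/2)] at h
  have hseq : s = Real.exp (a ^ 2) := by rw [ha2, Real.exp_log hspos]
  have hs1 : (1:ℝ) ≤ s := by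
    rw [hseq]; exact Real.one_le_exp (sq_nonneg a)
  rcases le_or_gt t a with h | h
  · have h1 : Real.exp (t ^ 2) ≥ 1 := Real.one_le_exp (sq_nonneg t)
    nlinarith [mul_le_mul_of_nonneg_left h hspos.le]
  · have hsum : (1:ℝ) ≤ t + a := by linarith
    have hdiff : t - a ≤ t ^ 2 - a ^ 2 := by nlinarith
    have h2 : 1 + (t ^ 2 - a ^ 2) ≤ Real.exp (t ^ 2 - a ^ 2) := by linarith [Real.add_one_le_exp (t ^ 2 - a ^ 2)]
    have h3 : s * (1 + (t - a)) ≤ Real.exp (t ^ 2) := by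
      have : Real.exp (t ^ 2) = s * Real.exp (t ^ 2 - a ^ 2) := by
        rw [hseq, ← Real.exp_add]; ring_nf
      rw [this]
      have : (1 : ℝ) + (t - a) ≤ Real.exp (t ^ 2 - a ^ 2) := by linarith
      exact mul_le_mul_of_nonneg_left this hspos.le
    nlinarith
end

section
/- For all (t, s) in [0,∞) × [e^{1/∛4}, ∞), one has t·s ≤ t²·(e^{t²} − 1) + s·(log s)^{1/2}. -/
open Real

/-- For all `(t, s) ∈ [0,∞) × [e^{1/∛4}, ∞)`:
    `t·s ≤ t²·(e^{t²} − 1) + s·(log s)^{1/2}`. -/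
theorem stmt_2 (t s : ℝ) (ht : 0 ≤ t) (hs : Real.exp (1 / (4 : ℝ) ^ ((1 : ℝ) / 3)) ≤ s) :
    t * s ≤ t ^ 2 * (Real.exp (t ^ 2) - 1) + s * Real.sqrt (Real.log s) := by
  -- numeric bound on 4^(1/3)
  have hx0 : (0:ℝ) < (4:ℝ) ^ ((1:ℝ)/3) := Real.rpow_pos_of_pos (by norm_num) _
  have hcube : ((4:ℝ) ^ ((1:ℝ)/3)) ^ (3:ℕ) = 4 := by
    rw [← Real.rpow_natCast ((4:ℝ) ^ ((1:ℝ)/3)) 3, ← Real.rpow_mul (by norm_num : (0:ℝ) ≤ 4)]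
    norm_num
  have hxle : (4:ℝ) ^ ((1:ℝ)/3) ≤ 1.5875 := by nlinarith [hx0, hcube, sq_nonneg ((4:ℝ)^((1:ℝ)/3) - 1.5875), sq_nonneg ((4:ℝ)^((1:ℝ)/3) + 1.5875)]
  have ha : (0.6242:ℝ) ≤ 1 / (4:ℝ) ^ ((1:ℝ)/3) := by
    rw [le_div_iff₀ hx0]; nlinarith
  have hs1 : (1:ℝ) ≤ s := le_trans (by rw [Real.one_le_exp_iff]; positivity) hs
  have hs0 : (0:ℝ) < s := lt_of_lt_of_le one_pos hs1
  have hlog : 1 / (4:ℝ) ^ ((1:ℝ)/3) ≤ Real.log s :=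
    (Real.le_log_iff_exp_le hs0).2 hs
  have hlog0 : (0:ℝ) ≤ Real.log s := by linarith
  have hsq : (0.79:ℝ) ≤ Real.sqrt (Real.log s) := by
    rw [show (0.79:ℝ) = Real.sqrt (0.79^2) by rw [Real.sqrt_sq (by norm_num)]]
    exact Real.sqrt_le_sqrt (by nlinarith)
  set L := Real.sqrt (Real.log s) with hL
  have hL0 : 0 ≤ L := Real.sqrt_nonneg _
  rcases le_or_gt t L with h | h
  · have h1 : t * s ≤ s * L := by nlinarith
    have h2 : (0:ℝ) ≤ t ^ 2 * (Real.exp (t ^ 2) - 1) := by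
      have := Real.one_le_exp (by positivity : (0:ℝ) ≤ t^2)
      nlinarith [sq_nonneg t]
    linarith
  · -- hard case: t > L ≥ 0.79
    have ht79 : (0.79:ℝ) ≤ t := le_trans hsq h.le
    have hLsq : L ^ 2 = Real.log s := Real.sq_sqrt hlog0
    have hsE : s ≤ Real.exp (t ^ 2) := by
      calc s = Real.exp (Real.log s) := (Real.exp_log hs0).symm
        _ ≤ Real.exp (t ^ 2) := Real.exp_le_exp.2 (by nlinarith)
    have hE : 1 + t ^ 2 ≤ Real.exp (t ^ 2) := by
      have := Real.add_one_le_exp (t ^ 2); linarith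
    have hEpos : (0:ℝ) < Real.exp (t ^ 2) := Real.exp_pos _
    -- s * (t - L) ≤ exp(t^2) * (t - 0.79)
    have key1 : s * (t - L) ≤ Real.exp (t ^ 2) * (t - 0.79) := by
      have h1 : s * (t - L) ≤ Real.exp (t ^ 2) * (t - L) := by
        apply mul_le_mul_of_nonneg_right hsE (by linarith)
      have h2 : Real.exp (t ^ 2) * (t - L) ≤ Real.exp (t ^ 2) * (t - 0.79) := by
        apply mul_le_mul_of_nonneg_left (by linarith) hEpos.le
      linarith
    -- exp(t^2) * (t - 0.79) ≤ t^2 * (exp(t^2) - 1)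
    have hq : (0:ℝ) ≤ t^4 - t^3 + 0.79*t^2 - t + 0.79 := by
      nlinarith [sq_nonneg (t*(t - 1/2)), sq_nonneg (t - 25/27)]
    have hF : (1 + t^2) * (t^2 - t + 0.79) ≤ Real.exp (t^2) * (t^2 - t + 0.79) :=
      mul_le_mul_of_nonneg_right hE (by nlinarith [sq_nonneg (2*t - 1)])
    have key2 : Real.exp (t ^ 2) * (t - 0.79) ≤ t ^ 2 * (Real.exp (t ^ 2) - 1) := by
      linarith [hF, hq]
    have hts : t * s - s * L = s * (t - L) := by ring
    linarith [key1, key2]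
end

section
/- Let ω̃_k = ω_k / ‖ω_k‖ where ω_k is the Moser sequence and ‖·‖ an H¹-type norm with ‖ω_k‖² = 1 + d_k/log k where d_k → r²·V/4 for some constant V > 0. Then for |x| ≤ r/k and k large, ω̃_k(x)² ≥ (1/2π)(log k − d_k'), with d_k' → r²V/4. -/
open MeasureTheory Real Filter

noncomputable def moser (r : ℝ) (k : ℕ) (x : EuclideanSpace ℝ (Fin 2)) : ℝ :=
  if ‖x‖ ≤ r / k then (Real.log k).sqrt / Real.sqrt (2 * π)
  else if ‖x‖ ≤ r then Real.log (r / ‖x‖) / (Real.sqrt (2 * π) * (Real.log k).sqrt)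
  else 0

theorem moser_sq_of_norm_le {r : ℝ} {k : ℕ} {x : EuclideanSpace ℝ (Fin 2)} (hx : ‖x‖ ≤ r / k) :
    moser r k x ^ 2 = Real.log k / (2 * π) := by
  rw [moser, if_pos hx, div_pow, Real.sq_sqrt (Real.log_natCast_nonneg k),
    Real.sq_sqrt (by positivity)]

theorem tendsto_one_add_div_log {d : ℕ → ℝ} {L : ℝ} (hd : Tendsto d atTop (nhds L)) :
    Tendsto (fun k : ℕ => 1 + d k / Real.log k) atTop (nhds 1) := by
  have hlog : Tendsto (fun k : ℕ => Real.log k) atTop atTop :=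
    Real.tendsto_log_atTop.comp tendsto_natCast_atTop_atTop
  simpa using tendsto_const_nhds.add (hd.div_atTop hlog)

theorem sub_div_eq_div_of_eq_one_add_div {a b c : ℝ} (ha : a ≠ 0) (hc : c ≠ 0)
    (h : c = 1 + b / a) : a - b / c = a / c := by
  have hb : b = (c - 1) * a := by rw [h]; field_simp; ring
  rw [hb]
  field_simp
  ring

theorem stmt_10_general (r V : ℝ)
    (d N : ℕ → ℝ) (hNpos : ∀ k, 0 < N k)
    (hN : ∀ k : ℕ, 2 ≤ k → (N k) ^ 2 = 1 + d k / Real.log k)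
    (hd : Tendsto d atTop (nhds (r ^ 2 * V / 4))) :
    ∃ d' : ℕ → ℝ, Tendsto d' atTop (nhds (r ^ 2 * V / 4)) ∧
      ∀ᶠ k : ℕ in atTop, ∀ x : EuclideanSpace ℝ (Fin 2), ‖x‖ ≤ r / k →
        (1 / (2 * π)) * (Real.log k - d' k) ≤ (moser r k x / N k) ^ 2 := by
  have hN_eventually : ∀ᶠ k : ℕ in atTop, 1 + d k / Real.log k = N k ^ 2 :=
    (eventually_ge_atTop 2).mono fun k hk => (hN k hk).symm
  have hNsq : Tendsto (fun k => N k ^ 2) atTop (nhds 1) :=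
    (tendsto_one_add_div_log hd).congr' hN_eventually
  -- With `d' = d / N²` the estimate is an equality: `log k - d / N² = log k / N²`.
  refine ⟨fun k => d k / N k ^ 2, by simpa [Pi.div_def] using hd.div hNsq one_ne_zero, ?_⟩
  filter_upwards [eventually_ge_atTop 2] with k hk x hx
  have hlog : Real.log k ≠ 0 := (Real.log_pos (by exact_mod_cast hk)).ne'
  rw [div_pow, moser_sq_of_norm_le hx,
    sub_div_eq_div_of_eq_one_add_div hlog (pow_pos (hNpos k) 2).ne' (hN k hk)]
  exact le_of_eq (by ring)

/-- Estimate (EstOfwn): if `ω̃_k = ω_k/N k` with `N k² = 1 + d_k/log k`, `N k > 0`,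
and `d_k → r² V/4` (`V > 0`), then there is `d'_k → r² V/4` such that for `k` large and
`|x| ≤ r/k`, `ω̃_k(x)² ≥ (1/2π)(log k − d'_k)`. -/
theorem stmt_10 (r V : ℝ) (hr : 0 < r) (hV : 0 < V)
    (d N : ℕ → ℝ) (hNpos : ∀ k, 0 < N k)
    (hN : ∀ k : ℕ, 2 ≤ k → (N k) ^ 2 = 1 + d k / Real.log k)
    (hd : Tendsto d atTop (nhds (r ^ 2 * V / 4))) :
    ∃ d' : ℕ → ℝ, Tendsto d' atTop (nhds (r ^ 2 * V / 4)) ∧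
      ∀ᶠ k : ℕ in atTop, ∀ x : EuclideanSpace ℝ (Fin 2), ‖x‖ ≤ r / k →
        (1 / (2 * π)) * (Real.log k - d' k) ≤ (moser r k x / N k) ^ 2 :=
  stmt_10_general r V d N hNpos hN hd
end

section
/- With the substitution s = r·e^{−a√(log k)·t}, one computes ∫_{B_r \ B_{r/k}} e^{4π ω̃_k²} dx ≥ π r² (1 − e^{−2 log k}) = π r² (1 − k^{−2}), where ω̃_k = ω_k/‖ω_k‖ with ‖ω_k‖ = a ≥ 1. -/
/-!
The integrand `exp (4π (moser r k x / a)²)` is at least `1`, so its integral over the annulus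
`r/k ≤ ‖x‖ ≤ r` is at least the area `π (r² - (r/k)²) = π r² (1 - k⁻²)` of the annulus.
It is integrable there because `moser r k` is bounded by `√(log k / 2π)`.
-/

open MeasureTheory Real

section Annulus

variable {E : Type*} [NormedAddCommGroup E]

lemma annulus_eq_closedBall_diff_ball (s r : ℝ) :
    {x : E | s ≤ ‖x‖ ∧ ‖x‖ ≤ r} = Metric.closedBall 0 r \ Metric.ball 0 s := by
  ext x
  simp [and_comm]

variable [MeasurableSpace E]

lemma measurableSet_annulus [OpensMeasurableSpace E] (s r : ℝ) :
    MeasurableSet {x : E | s ≤ ‖x‖ ∧ ‖x‖ ≤ r} := by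
  rw [annulus_eq_closedBall_diff_ball]
  exact measurableSet_closedBall.diff measurableSet_ball

lemma measure_annulus_ne_top [ProperSpace E] (μ : Measure E) [IsFiniteMeasureOnCompacts μ]
    (s r : ℝ) : μ {x : E | s ≤ ‖x‖ ∧ ‖x‖ ≤ r} ≠ ⊤ := by
  rw [annulus_eq_closedBall_diff_ball]
  exact measure_ne_top_of_subset Set.sdiff_subset measure_closedBall_lt_top.ne

end Annulus

lemma EuclideanSpace.volume_real_annulus_fin_two {s r : ℝ} (hs : 0 ≤ s) (hsr : s ≤ r) :
    volume.real {x : EuclideanSpace ℝ (Fin 2) | s ≤ ‖x‖ ∧ ‖x‖ ≤ r} = π * (r ^ 2 - s ^ 2) := by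
  rw [annulus_eq_closedBall_diff_ball, measureReal_sdiff
    (Metric.ball_subset_closedBall.trans (Metric.closedBall_subset_closedBall hsr))
    measurableSet_ball measure_closedBall_lt_top.ne]
  simp [measureReal_def, ENNReal.toReal_ofReal, hs, hs.trans hsr, pi_pos.le]
  ring

lemma measurable_moser (r : ℝ) (k : ℕ) : Measurable (moser r k) := by
  unfold moser
  refine Measurable.ite (measurableSet_le measurable_norm measurable_const) measurable_const ?_
  refine Measurable.ite (measurableSet_le measurable_norm measurable_const) ?_ measurable_const
  exact (measurable_log.comp (measurable_const.div measurable_norm)).div_const _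

lemma moser_sq_le (r : ℝ) (k : ℕ) (x : EuclideanSpace ℝ (Fin 2)) :
    moser r k x ^ 2 ≤ log k / (2 * π) := by
  have hlogk : 0 ≤ log k := log_natCast_nonneg k
  unfold moser
  split_ifs with h_inner h_outer
  · rw [div_pow, sq_sqrt hlogk, sq_sqrt (by positivity)]
  · rw [div_pow, mul_pow, sq_sqrt hlogk, sq_sqrt (by positivity)]
    rcases hlogk.eq_or_lt with hlog0 | hlogpos
    · -- `k ≤ 1`: the denominator vanishes and `x / 0 = 0`
      simp [← hlog0]
    have hk : (1 : ℝ) < k := (log_pos_iff k.cast_nonneg).mp hlogpos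
    have hx : 0 < ‖x‖ := lt_of_le_of_lt
      (div_nonneg ((norm_nonneg x).trans h_outer) k.cast_nonneg) (not_le.mp h_inner)
    have hL_nonneg : 0 ≤ log (r / ‖x‖) := log_nonneg (by rwa [le_div_iff₀ hx, one_mul])
    have hL_le : log (r / ‖x‖) ≤ log k := by
      refine log_le_log (div_pos (hx.trans_le h_outer) hx) ?_
      rw [div_le_iff₀ hx, mul_comm]
      exact ((div_lt_iff₀ (by positivity)).mp (not_le.mp h_inner)).le
    rw [div_le_div_iff₀ (by positivity) (by positivity)]
    have hπ := pi_pos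
    nlinarith [mul_le_mul hL_le hL_le hL_nonneg hlogk]
  · rw [sq, zero_mul]
    positivity

lemma integrableOn_exp_moser_sq (r a : ℝ) (k : ℕ) {s : Set (EuclideanSpace ℝ (Fin 2))}
    (hs : volume s ≠ ⊤) :
    IntegrableOn (fun x ↦ exp (4 * π * (moser r k x / a) ^ 2)) s := by
  refine Measure.integrableOn_of_bounded hs
    ((((measurable_moser r k).div_const a).pow_const 2).const_mul _).exp.aestronglyMeasurable
    (M := exp (4 * π * (log k / (2 * π) / a ^ 2))) (ae_of_all _ fun x ↦ ?_)
  rw [norm_of_nonneg (exp_nonneg _), exp_le_exp, div_pow]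
  gcongr
  exact moser_sq_le r k x

theorem stmt_11_general (r : ℝ) (hr : 0 < r) (k : ℕ) (hk : 2 ≤ k) (a : ℝ) :
    π * r ^ 2 * (1 - Real.exp (-2 * Real.log k))
      ≤ ∫ x in {x : EuclideanSpace ℝ (Fin 2) | r / k ≤ ‖x‖ ∧ ‖x‖ ≤ r},
          Real.exp (4 * π * (moser r k x / a) ^ 2) ∂volume := by
  have hk1 : (1 : ℝ) ≤ k := by exact_mod_cast (by omega : 1 ≤ k)
  have hk0 : (0 : ℝ) < k := one_pos.trans_le hk1
  have h_exp : exp (-2 * log k) = ((k : ℝ) ^ 2)⁻¹ := by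
    rw [neg_mul, exp_neg, ← log_rpow hk0, exp_log (by positivity), rpow_two]
  calc π * r ^ 2 * (1 - exp (-2 * log k))
      = 1 * volume.real {x : EuclideanSpace ℝ (Fin 2) | r / k ≤ ‖x‖ ∧ ‖x‖ ≤ r} := by
        rw [EuclideanSpace.volume_real_annulus_fin_two (by positivity)
          (div_le_self hr.le hk1), h_exp]
        field_simp
    _ ≤ _ := setIntegral_ge_of_const_le_real (measurableSet_annulus _ _)
        (measure_annulus_ne_top volume _ _) (fun x _ ↦ one_le_exp (by positivity))
        (integrableOn_exp_moser_sq r a k (measure_annulus_ne_top volume _ _))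

/-- On the annulus `B_r \ B_{r/k}` one has
`∫ e^{4π ω̃_k²} dx ≥ π r² (1 − e^{−2 log k})`, where `ω̃_k = ω_k/a` with `a ≥ 1`. -/
theorem stmt_11 (r : ℝ) (hr : 0 < r) (k : ℕ) (hk : 2 ≤ k) (a : ℝ) (ha : 1 ≤ a) :
    π * r ^ 2 * (1 - Real.exp (-2 * Real.log k))
      ≤ ∫ x in {x : EuclideanSpace ℝ (Fin 2) | r / k ≤ ‖x‖ ∧ ‖x‖ ≤ r},
          Real.exp (4 * π * (moser r k x / a) ^ 2) ∂volume :=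
  stmt_11_general r hr k hk a
end
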